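/- arXiv:1910.09300 — 4 statements merged into one kernel-verified Lean document; each statement's English description precedes it below -/
import Mathlib

section
/- Let u be a cyclic permutation of the reduced form ρ(v) of a word v. Then there exists a cyclic permutation v' of v itself such that ρ(v') = ρ(u). -/
/-- Words over `X ∪ X⁻¹`: elements of the free monoid on `α × Bool`. -/
abbrev Word (α : Type*) := List (α × Bool)

/-- The formal inverse of a word. -/
def wInv {α : Type*} (w : Word α) : Word α := FreeGroup.invRev w

/-- `u` is a cyclic permutation of `v`. -/
def IsCycPerm {α : Type*} (u v : Word α) : Prop :=
  ∃ a b : Word α, v = a ++ b ∧ u = b ++ a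

variable {α : Type*} [DecidableEq α]

/-- A word is reduced if it is fixed by free reduction. -/
def Reduced (w : Word α) : Prop := FreeGroup.reduce w = w

/-- Auxiliary, fuelled computation of the cyclically reduced form of a
reduced word: repeatedly peel off a first letter that is inverse to the
last letter. -/
def cyclicReduceAux : ℕ → Word α → Word α
  | 0, w => w
  | n + 1, [] => []
  | n + 1, x :: xs =>
      if xs.getLast? = some (x.1, !x.2) then cyclicReduceAux n xs.dropLast
      else x :: xs

/-- The cyclically reduced form `ρ̂(w)` of a word `w`. -/
def cyclicReduce (w : Word α) : Word α :=
  cyclicReduceAux w.length (FreeGroup.reduce w)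

/-- The cyclically reduced product `u * v := ρ̂(uv)`. -/
def crp (u v : Word α) : Word α := cyclicReduce (u ++ v)
lemma step_cycPerm {v w u : Word α} (hs : FreeGroup.Red.Step v w)
    (h : IsCycPerm u w) :
    ∃ v', IsCycPerm v' v ∧ FreeGroup.Red.Step v' u := by
  obtain ⟨c, d, hw, hu⟩ := h
  cases hs with
  | @not L₁ L₂ x b =>
    rw [List.append_eq_append_iff] at hw
    rcases hw with ⟨m, hc, hL₂⟩ | ⟨m, hL₁, hd⟩
    · refine ⟨d ++ (L₁ ++ (x, b) :: (x, !b) :: m),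
        ⟨L₁ ++ (x, b) :: (x, !b) :: m, d, by simp [hL₂], rfl⟩, ?_⟩
      have := @FreeGroup.Red.Step.not α (d ++ L₁) m x b
      simpa [hu, hc] using this
    · refine ⟨(m ++ (x, b) :: (x, !b) :: L₂) ++ c,
        ⟨c, m ++ (x, b) :: (x, !b) :: L₂, by simp [hL₁], rfl⟩, ?_⟩
      have := @FreeGroup.Red.Step.not α m (L₂ ++ c) x b
      simpa [hu, hd] using this

lemma red_cycPerm {v w : Word α} (hr : FreeGroup.Red v w) :
    ∀ u, IsCycPerm u w →
    ∃ v', IsCycPerm v' v ∧ FreeGroup.reduce v' = FreeGroup.reduce u := by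
  induction hr using Relation.ReflTransGen.head_induction_on with
  | refl => exact fun u hu => ⟨u, hu, rfl⟩
  | head hs _ ih =>
    intro u hu
    obtain ⟨v1', h1, h2⟩ := ih u hu
    obtain ⟨v', hv', hstep⟩ := step_cycPerm hs h1
    exact ⟨v', hv', (FreeGroup.reduce.Step.eq hstep).trans h2⟩

theorem exists_cycPerm_reduce_eq (u v : Word α)
    (h : IsCycPerm u (FreeGroup.reduce v)) :
    ∃ v' : Word α, IsCycPerm v' v ∧ FreeGroup.reduce v' = FreeGroup.reduce u := by
  exact red_cycPerm FreeGroup.reduce.red u h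
end

section
/- For any two words u and v, the cyclically reduced product u * v is a cyclic permutation of v * u. -/
variable {α : Type*} [DecidableEq α]

/-!
Since `v ++ u` is a rotation of `u ++ v`, by induction on `u` it suffices to move a single letter
`a` from the front of a word to its back. Let `r` be the free reduction of the rest of the word.
If `a` cancels against neither end of `r`, both `a :: r` and `r ++ [a]` are reduced; then each is
cyclically reduced, and they are rotations of each other. If `a` cancels against exactly one end,
one side reduces to a word `s` and the other is `s` conjugated by a letter, so both have the same
cyclic reduction. If `a` cancels against both ends, `r = a⁻¹ m a⁻¹` and the two reduced
words `m a⁻¹` and `a⁻¹ m` are again cyclically reduced rotations of each other.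
-/

omit [DecidableEq α] in
theorem IsCycPerm.refl (w : Word α) : IsCycPerm w w := ⟨w, [], by simp, by simp⟩

omit [DecidableEq α] in
theorem IsCycPerm.symm {u v : Word α} : IsCycPerm u v → IsCycPerm v u :=
  fun ⟨a, b, hv, hu⟩ => ⟨b, a, hu, hv⟩

omit [DecidableEq α] in
theorem IsCycPerm.trans {t u v : Word α} (htu : IsCycPerm t u) (huv : IsCycPerm u v) :
    IsCycPerm t v := by
  obtain ⟨c, d, rfl, rfl⟩ := htu
  obtain ⟨a, b, rfl, hu⟩ := huv
  rcases List.append_eq_append_iff.1 hu with ⟨e, rfl, rfl⟩ | ⟨e, rfl, rfl⟩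
  · exact ⟨a ++ c, e, by simp, by simp⟩
  · exact ⟨e, d ++ b, by simp, by simp⟩

namespace FreeGroup

omit [DecidableEq α] in
theorem eq_inv_letter_of_cancels {a b : α × Bool} (h : ¬(a.1 = b.1 → a.2 = b.2)) :
    b = (a.1, !a.2) := by
  obtain ⟨a1, a2⟩ := a
  obtain ⟨b1, b2⟩ := b
  cases a2 <;> cases b2 <;> simp_all

omit [DecidableEq α] in
theorem isReduced_concat_concat {L : Word α} {b a : α × Bool} :
    IsReduced (L ++ [b] ++ [a]) ↔ IsReduced (L ++ [b]) ∧ (b.1 = a.1 → b.2 = a.2) := by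
  rw [IsReduced, List.isChain_append, List.getLast?_concat]
  simp [and_comm, IsReduced]

omit [DecidableEq α] in
theorem exists_eq_cons_of_not_isReduced_cons {r : Word α} {a : α × Bool} (hr : IsReduced r)
    (h : ¬IsReduced (a :: r)) : ∃ s, r = (a.1, !a.2) :: s := by
  obtain _ | ⟨b, s⟩ := r
  · exact absurd .singleton h
  · rw [isReduced_cons_cons, and_iff_left hr] at h
    exact ⟨s, by rw [eq_inv_letter_of_cancels h]⟩

omit [DecidableEq α] in
theorem exists_eq_concat_of_not_isReduced_concat {r : Word α} {a : α × Bool} (hr : IsReduced r)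
    (h : ¬IsReduced (r ++ [a])) : ∃ s, r = s ++ [(a.1, !a.2)] := by
  obtain rfl | ⟨s, b, rfl⟩ := r.eq_nil_or_concat
  · exact absurd .singleton h
  · rw [List.concat_eq_append] at hr h ⊢
    rw [isReduced_concat_concat, and_iff_right hr] at h
    exact ⟨s, by simp [eq_inv_letter_of_cancels h]⟩

theorem reduce_cons_inv_cons (a : α × Bool) (s : Word α) :
    reduce (a :: (a.1, !a.2) :: s) = reduce s :=
  reduce.Step.eq Red.Step.cons_not

theorem reduce_concat_inv_concat (a : α × Bool) (s : Word α) :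
    reduce (s ++ [(a.1, !a.2)] ++ [a]) = reduce s := by
  simpa using reduce.Step.eq (Red.Step.not_rev (L₁ := s) (L₂ := []) (x := a.1) (b := a.2))

theorem reduceCyclically_cons_of_isReduced_concat {L : Word α} {a : α × Bool}
    (h : IsReduced (L ++ [a])) : reduceCyclically (a :: L) = a :: L := by
  obtain rfl | ⟨s, b, rfl⟩ := L.eq_nil_or_concat
  · simp
  · rw [List.concat_eq_append, isReduced_concat_concat] at *
    rw [reduceCyclically.cons_append, if_neg (by grind), List.cons_append]

theorem reduceCyclically_concat_of_isReduced_cons {L : Word α} {a : α × Bool}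
    (h : IsReduced (a :: L)) : reduceCyclically (L ++ [a]) = L ++ [a] := by
  obtain _ | ⟨b, s⟩ := L
  · simp
  · rw [isReduced_cons_cons] at h
    rw [List.cons_append, reduceCyclically.cons_append, if_neg (by grind), List.cons_append]

theorem isCycPerm_reduceCyclically_concat_cons {L : Word α} {a : α × Bool}
    (h₁ : IsReduced (a :: L)) (h₂ : IsReduced (L ++ [a])) :
    IsCycPerm (reduceCyclically (L ++ [a])) (reduceCyclically (a :: L)) := by
  rw [reduceCyclically_cons_of_isReduced_concat h₂, reduceCyclically_concat_of_isReduced_cons h₁]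
  exact ⟨[a], L, rfl, rfl⟩

theorem isCycPerm_reduceCyclically_reduce_concat_cons {r : Word α} (hr : IsReduced r)
    (a : α × Bool) :
    IsCycPerm (reduceCyclically (reduce (r ++ [a]))) (reduceCyclically (reduce (a :: r))) := by
  by_cases hf : IsReduced (a :: r) <;> by_cases hb : IsReduced (r ++ [a])
  · rw [hf.reduce_eq, hb.reduce_eq]
    exact isCycPerm_reduceCyclically_concat_cons hf hb
  · obtain ⟨s, rfl⟩ := exists_eq_concat_of_not_isReduced_concat hr hb
    rw [reduce_concat_inv_concat, hf.reduce_eq, reduceCyclically.cons_append, if_pos (by simp),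
      (hr.infix ⟨[], _, rfl⟩).reduce_eq]
    exact .refl _
  · obtain ⟨s, rfl⟩ := exists_eq_cons_of_not_isReduced_cons hr hf
    rw [reduce_cons_inv_cons, hb.reduce_eq, List.cons_append, reduceCyclically.cons_append,
      if_pos (by simp), (hr.infix ⟨[(a.1, !a.2)], [], by simp⟩).reduce_eq]
    exact .refl _
  · obtain ⟨s, rfl⟩ := exists_eq_cons_of_not_isReduced_cons hr hf
    obtain rfl | hs := eq_or_ne s []
    · have h : reduce ([(a.1, !a.2)] ++ [a]) = [] := reduce_concat_inv_concat a []
      rw [reduce_cons_inv_cons, h, reduce_nil]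
      exact .refl _
    have hsa : ¬IsReduced (s ++ [a]) := fun h => hb (hr.append_overlap (L₁ := [_]) h hs)
    obtain ⟨m, rfl⟩ :=
      exists_eq_concat_of_not_isReduced_concat (hr.infix ⟨[(a.1, !a.2)], [], by simp⟩) hsa
    have hm_front : IsReduced ((a.1, !a.2) :: m) := hr.infix ⟨[], [(a.1, !a.2)], by simp⟩
    have hm_back : IsReduced (m ++ [(a.1, !a.2)]) := hr.infix ⟨[(a.1, !a.2)], [], by simp⟩
    rw [reduce_cons_inv_cons, ← List.cons_append, reduce_concat_inv_concat, hm_front.reduce_eq,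
      hm_back.reduce_eq]
    exact (isCycPerm_reduceCyclically_concat_cons hm_front hm_back).symm

end FreeGroup

open FreeGroup

theorem cyclicReduceAux_eq_reduceCyclically {n : ℕ} {L : Word α} (h : L.length ≤ n) :
    cyclicReduceAux n L = reduceCyclically L := by
  induction n generalizing L with
  | zero => simp_all [cyclicReduceAux]
  | succ n ih =>
    obtain _ | ⟨a, L⟩ := L
    · simp [cyclicReduceAux]
    obtain rfl | ⟨m, b, rfl⟩ := L.eq_nil_or_concat
    · simp [cyclicReduceAux]
    rw [List.concat_eq_append] at h ⊢
    simp only [List.length_cons, List.length_append] at h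
    rw [cyclicReduceAux, reduceCyclically.cons_append, List.getLast?_concat,
      List.dropLast_concat, ih (by omega)]
    congr 1
    simp only [Option.some.injEq, Prod.ext_iff]
    grind

theorem cyclicReduce_eq_reduceCyclically_reduce (L : Word α) :
    cyclicReduce L = reduceCyclically (reduce L) :=
  cyclicReduceAux_eq_reduceCyclically (Red.length_le reduce.red)

theorem isCycPerm_cyclicReduce_concat_cons (L : Word α) (a : α × Bool) :
    IsCycPerm (cyclicReduce (L ++ [a])) (cyclicReduce (a :: L)) := by
  rw [cyclicReduce_eq_reduceCyclically_reduce, cyclicReduce_eq_reduceCyclically_reduce,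
    ← reduce_cons_reduce, ← reduce_append_reduce_reduce, reduce_singleton]
  exact isCycPerm_reduceCyclically_reduce_concat_cons (isReduced_iff_reduce_eq.2 reduce.idem) a

theorem crp_comm_cycPerm (u v : Word α) : IsCycPerm (crp u v) (crp v u) := by
  induction u generalizing v with
  | nil => simpa [crp] using IsCycPerm.refl _
  | cons a u ih =>
    have hrot : crp v (a :: u) = crp (v ++ [a]) u := by simp [crp]
    have hstep : IsCycPerm (crp u (v ++ [a])) (crp (a :: u) v) := by
      simpa [crp] using isCycPerm_cyclicReduce_concat_cons (u ++ v) a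
    exact hrot ▸ hstep.symm.trans (ih (v ++ [a]))
end

section
/- Suppose the reduced form of a word u factors as a concatenation ρ(u) = v₁v₂ of words v₁, v₂. Then there exist words u₁, u₂ with u = u₁u₂ (concatenation in the free monoid), ρ(u₁) = v₁, and ρ(u₂) = v₂. -/
variable {α : Type*} [DecidableEq α]

theorem exists_factorization_of_reduce_append (u v₁ v₂ : Word α)
    (h : FreeGroup.reduce u = v₁ ++ v₂) :
    ∃ u₁ u₂ : Word α, u = u₁ ++ u₂ ∧
      FreeGroup.reduce u₁ = v₁ ∧ FreeGroup.reduce u₂ = v₂ := by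
  have hred : FreeGroup.Red u (v₁ ++ v₂) := h ▸ FreeGroup.reduce.red
  obtain ⟨u₁, u₂, rfl, h₁, h₂⟩ := FreeGroup.Red.to_append_iff.1 hred
  refine ⟨u₁, u₂, rfl, ?_⟩
  have e₁ : FreeGroup.reduce u₁ = FreeGroup.reduce v₁ := FreeGroup.reduce.eq_of_red h₁
  have e₂ : FreeGroup.reduce u₂ = FreeGroup.reduce v₂ := FreeGroup.reduce.eq_of_red h₂
  have hmin : v₁ ++ v₂ = FreeGroup.reduce v₁ ++ FreeGroup.reduce v₂ := by
    have : FreeGroup.Red (FreeGroup.reduce (u₁ ++ u₂))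
        (FreeGroup.reduce v₁ ++ FreeGroup.reduce v₂) := by
      rw [h]
      exact FreeGroup.Red.append_append FreeGroup.reduce.red FreeGroup.reduce.red
    exact h ▸ FreeGroup.reduce.min this
  have hl : (FreeGroup.reduce v₁).length = v₁.length := by
    have l1 : (FreeGroup.reduce v₁).length ≤ v₁.length :=
      (FreeGroup.Red.sublist (FreeGroup.reduce.red (L := v₁))).length_le
    have l2 : (FreeGroup.reduce v₂).length ≤ v₂.length :=
      (FreeGroup.Red.sublist (FreeGroup.reduce.red (L := v₂))).length_le
    have := congrArg List.length hmin
    simp only [List.length_append] at this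
    omega
  obtain ⟨a, b⟩ := List.append_inj hmin.symm hl
  exact ⟨e₁.trans a, e₂.trans b⟩
end

section
/- Let u and v be reduced words over X with u ≠ v⁻¹, and set g := u * v (the cyclically reduced product). Then one of the following three cases holds: (1) there exist words u₁, a, s such that u = u₁a, v = a⁻¹ s g s⁻¹ u₁⁻¹, and ρ(uv) = u₁ s g s⁻¹ u₁⁻¹; (2) there exist non-empty words c₁, c₂ and words t, a such that g = c₁c₂, u = t c₁ a, v = a⁻¹ c₂ t⁻¹, ρ(uv) = t c₁c₂ t⁻¹, ρ(vu) = a⁻¹ c₂c₁ a, and v * u = c₂c₁; (3) there exist words v₁, s, a such that u = v₁⁻¹ s g s⁻¹ a, v = a⁻¹ v₁, and ρ(uv) = v₁⁻¹ s g s⁻¹ v₁. -/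
variable {α : Type*} [DecidableEq α]

/-!
Cancel the longest suffix `a` of `u` against the inverse prefix of `v`: then `u = u₁ a`,
`v = a⁻¹ v₂` and `ρ(uv) = u₁ v₂`. Peeling inverse first and last letters off this reduced word
writes it as `s g s⁻¹` with `g` cyclically reduced, and `u * v = g`. The three cases record
where the cut between `u₁` and `v₂` falls: inside `s`, inside `g`, or inside `s⁻¹`. In the
middle case `g = c₁ c₂`, and `vu` reduces to `a⁻¹ c₂ c₁ a` because the rotation `c₂ c₁` of the
cyclically reduced word `g` is again cyclically reduced.
-/

open FreeGroup List

section

variable {α : Type*}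

theorem FreeGroup.IsCyclicallyReduced.append_comm {L₁ L₂ : List (α × Bool)}
    (h : IsCyclicallyReduced (L₁ ++ L₂)) : IsCyclicallyReduced (L₂ ++ L₁) := by
  obtain rfl | h₁ := eq_or_ne L₁ []
  · simpa using h
  obtain rfl | h₂ := eq_or_ne L₂ []
  · simpa using h
  obtain ⟨hred, hcyc⟩ := h
  obtain ⟨hL₁, hL₂, hjoin⟩ := isChain_append.1 hred
  refine ⟨isChain_append.2 ⟨hL₂, hL₁, fun a ha b hb => ?_⟩, fun a ha b hb => ?_⟩
  · exact hcyc a (by rwa [getLast?_append_of_ne_nil _ h₂]) b (by rwa [head?_append_of_ne_nil _ h₁])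
  · rw [getLast?_append_of_ne_nil _ h₁] at ha
    rw [head?_append_of_ne_nil _ h₂] at hb
    exact hjoin a ha b hb

theorem FreeGroup.IsCyclicallyReduced.getLast?_ne {x : α × Bool} {L : List (α × Bool)}
    (h : IsCyclicallyReduced (x :: L)) : L.getLast? ≠ some (x.1, !x.2) := by
  intro hL
  have hlast : (x.1, !x.2) ∈ (x :: L).getLast? := by
    rw [getLast?_cons, hL]; rfl
  simpa using h.2 _ hlast x rfl

theorem exists_of_append_eq_conj_of_length_le_left {x y s g : List (α × Bool)}
    (h : x ++ y = s ++ g ++ invRev s) (hx : x.length ≤ s.length) :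
    ∃ t, y = t ++ g ++ invRev t ++ invRev x := by
  obtain ⟨t, rfl⟩ : x <+: s :=
    prefix_of_prefix_length_le ⟨y, rfl⟩ ⟨g ++ invRev s, by rw [← append_assoc, h]⟩ hx
  refine ⟨t, append_cancel_left (as := x) ?_⟩
  simpa [invRev_append] using h

theorem exists_of_append_eq_conj_of_length_le_right {x y s g : List (α × Bool)}
    (h : x ++ y = s ++ g ++ invRev s) (hy : y.length ≤ s.length) :
    ∃ t, x = invRev y ++ t ++ g ++ invRev t := by
  have h' : invRev y ++ invRev x = s ++ invRev g ++ invRev s := by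
    simpa [invRev_append, invRev_invRev] using congrArg invRev h
  obtain ⟨t, ht⟩ := exists_of_append_eq_conj_of_length_le_left h' (by rwa [invRev_length])
  refine ⟨t, invRev_injective ?_⟩
  simpa [invRev_append, invRev_invRev] using ht

theorem exists_of_append_eq_conj_of_length_lt {x y s g : List (α × Bool)}
    (h : x ++ y = s ++ g ++ invRev s) (hx : s.length < x.length) (hy : s.length < y.length) :
    ∃ c₁ c₂, c₁ ≠ [] ∧ c₂ ≠ [] ∧ g = c₁ ++ c₂ ∧ x = s ++ c₁ ∧ y = c₂ ++ invRev s := by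
  obtain ⟨c₁, rfl⟩ : s <+: x :=
    prefix_of_prefix_length_le ⟨g ++ invRev s, by rw [← append_assoc, h]⟩ ⟨y, rfl⟩ hx.le
  obtain ⟨c₂, rfl⟩ : invRev s <:+ y :=
    suffix_of_suffix_length_le ⟨_, h.symm⟩ ⟨_, rfl⟩ (by rw [invRev_length]; omega)
  refine ⟨c₁, c₂, ?_, ?_, ?_, rfl, rfl⟩
  · rintro rfl; simp at hx
  · rintro rfl; simp [invRev_length] at hy
  · exact append_cancel_right (bs := invRev s) (by simpa using h.symm)

end

theorem reduce_append_invRev_append (p t q : Word α) :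
    reduce (p ++ invRev t ++ t ++ q) = reduce (p ++ q) := by
  apply reduce.sound
  simp only [← mul_mk, ← inv_mk, inv_mul_cancel_right]

theorem cyclicReduceAux_conj {g : Word α} (hg : IsCyclicallyReduced g) (s : Word α) {n : ℕ}
    (hn : (s ++ g ++ invRev s).length ≤ n) : cyclicReduceAux n (s ++ g ++ invRev s) = g := by
  induction s generalizing n with
  | nil =>
    simp only [nil_append, invRev_empty, append_nil]
    match n, g, hg with
    | 0, _, _ => rfl
    | _ + 1, [], _ => rfl
    | _ + 1, _ :: _, hg => simp [cyclicReduceAux, hg.getLast?_ne]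
  | cons x s ih =>
    obtain _ | n := n
    · simp at hn
    have hx : x :: s ++ g ++ invRev (x :: s) = x :: (s ++ g ++ invRev s ++ [(x.1, !x.2)]) := by
      simp [invRev]
    rw [hx] at hn ⊢
    rw [cyclicReduceAux, if_pos getLast?_concat, dropLast_concat]
    exact ih (by simp [invRev_length] at hn ⊢; omega)

theorem crp_eq_of_reduce_eq {u v s g : Word α} (h : reduce (u ++ v) = s ++ g ++ invRev s)
    (hg : IsCyclicallyReduced g) : crp u v = g := by
  rw [crp, cyclicReduce, h]
  refine cyclicReduceAux_conj hg s ?_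
  rw [← h]
  exact reduce.red.length_le

theorem exists_reduce_append_eq {u v : Word α} (hu : IsReduced u) (hv : IsReduced v) :
    ∃ u₁ a v₂, u = u₁ ++ a ∧ v = invRev a ++ v₂ ∧ reduce (u ++ v) = u₁ ++ v₂ := by
  induction u using reverseRecOn generalizing v with
  | nil => exact ⟨[], [], v, rfl, rfl, hv.reduce_eq⟩
  | append_singleton u x ih =>
    by_cases hcancel : v.head? = some (x.1, !x.2)
    · obtain ⟨v, rfl⟩ : ∃ v', v = (x.1, !x.2) :: v' := by
        obtain _ | ⟨y, v⟩ := v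
        · simp at hcancel
        · exact ⟨v, by simpa using hcancel⟩
      obtain ⟨u₁, a, v₂, rfl, rfl, hred⟩ :=
        ih (hu.infix (prefix_append u [x]).isInfix) (hv.infix (suffix_cons _ _).isInfix)
      refine ⟨u₁, a ++ [x], v₂, by simp, by simp [invRev], ?_⟩
      have hx : u₁ ++ a ++ [x] ++ ((x.1, !x.2) :: (invRev a ++ v₂)) =
          u₁ ++ a ++ invRev [(x.1, !x.2)] ++ [(x.1, !x.2)] ++ (invRev a ++ v₂) := by
        simp [invRev]
      rw [hx, reduce_append_invRev_append, hred]
    · refine ⟨u ++ [x], [], v, by simp, by simp, IsReduced.reduce_eq ?_⟩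
      refine isChain_append.2 ⟨hu, hv, fun a ha b hb hab => ?_⟩
      obtain rfl : x = a := by simpa using ha
      by_contra hne
      exact hcancel (by rw [hb, hab, Bool.eq_not.2 hne, Bool.not_not])

theorem reduce_append_eq_of_isCyclicallyReduced {s c₁ c₂ a : Word α}
    (hu : IsReduced (s ++ c₁ ++ a)) (hv : IsReduced (invRev a ++ c₂ ++ invRev s))
    (hg : IsCyclicallyReduced (c₁ ++ c₂)) (hc₁ : c₁ ≠ []) (hc₂ : c₂ ≠ []) :
    reduce (invRev a ++ c₂ ++ invRev s ++ (s ++ c₁ ++ a)) = invRev a ++ c₂ ++ c₁ ++ a := by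
  have hrot : IsReduced (invRev a ++ c₂ ++ c₁) :=
    (hv.infix ⟨[], invRev s, rfl⟩).append_overlap hg.append_comm.isReduced hc₂
  rw [← append_assoc, ← append_assoc, append_assoc _ c₁ a, reduce_append_invRev_append,
    ← append_assoc]
  exact (hrot.append_overlap (hu.infix ⟨s, [], by simp⟩) hc₁).reduce_eq

theorem shirv_general (u v : Word α) (hu : Reduced u) (hv : Reduced v) :
    (∃ u₁ a s : Word α,
        u = u₁ ++ a ∧
        v = wInv a ++ s ++ crp u v ++ wInv s ++ wInv u₁ ∧
        FreeGroup.reduce (u ++ v) = u₁ ++ s ++ crp u v ++ wInv s ++ wInv u₁) ∨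
    (∃ c₁ c₂ t a : Word α,
        c₁ ≠ [] ∧ c₂ ≠ [] ∧
        crp u v = c₁ ++ c₂ ∧
        u = t ++ c₁ ++ a ∧
        v = wInv a ++ c₂ ++ wInv t ∧
        FreeGroup.reduce (u ++ v) = t ++ c₁ ++ c₂ ++ wInv t ∧
        FreeGroup.reduce (v ++ u) = wInv a ++ c₂ ++ c₁ ++ a ∧
        crp v u = c₂ ++ c₁) ∨
    (∃ v₁ s a : Word α,
        u = wInv v₁ ++ s ++ crp u v ++ wInv s ++ a ∧
        v = wInv a ++ v₁ ∧
        FreeGroup.reduce (u ++ v) = wInv v₁ ++ s ++ crp u v ++ wInv s ++ v₁) := by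
  rw [Reduced, ← isReduced_iff_reduce_eq] at hu hv
  obtain ⟨u₁, a, v₂, rfl, rfl, hred⟩ := exists_reduce_append_eq hu hv
  have hw : IsReduced (u₁ ++ v₂) := hred ▸ isReduced_iff_reduce_eq.2 reduce.idem
  obtain ⟨s, g, hconj, hg⟩ : ∃ s g, u₁ ++ v₂ = s ++ g ++ invRev s ∧ IsCyclicallyReduced g :=
    ⟨_, _, (reduceCyclically.conj_conjugator_reduceCyclically _).symm,
      reduceCyclically.isCyclicallyReduced hw⟩
  rw [crp_eq_of_reduce_eq (hred.trans hconj) hg]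
  unfold wInv
  rcases le_or_gt u₁.length s.length with h₁ | h₁
  · obtain ⟨t, rfl⟩ := exists_of_append_eq_conj_of_length_le_left hconj h₁
    exact Or.inl ⟨u₁, a, t, rfl, by simp, hred.trans (by simp)⟩
  rcases le_or_gt v₂.length s.length with h₂ | h₂
  · obtain ⟨t, rfl⟩ := exists_of_append_eq_conj_of_length_le_right hconj h₂
    exact Or.inr (Or.inr ⟨v₂, t, a, by simp, rfl, hred.trans (by simp)⟩)
  obtain ⟨c₁, c₂, hc₁, hc₂, hgc, rfl, rfl⟩ := exists_of_append_eq_conj_of_length_lt hconj h₁ h₂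
  rw [hgc] at hg ⊢
  have hvu := reduce_append_eq_of_isCyclicallyReduced hu (by simpa using hv) hg hc₁ hc₂
  refine Or.inr (Or.inl ⟨c₁, c₂, s, a, hc₁, hc₂, rfl, rfl, by simp, hred.trans (by simp),
    by simpa using hvu, ?_⟩)
  exact crp_eq_of_reduce_eq (s := invRev a) (by simpa [invRev_invRev] using hvu) hg.append_comm

theorem shirv (u v : Word α) (hu : Reduced u) (hv : Reduced v)
    (hne : u ≠ wInv v) :
    (∃ u₁ a s : Word α,
        u = u₁ ++ a ∧
        v = wInv a ++ s ++ crp u v ++ wInv s ++ wInv u₁ ∧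
        FreeGroup.reduce (u ++ v) = u₁ ++ s ++ crp u v ++ wInv s ++ wInv u₁) ∨
    (∃ c₁ c₂ t a : Word α,
        c₁ ≠ [] ∧ c₂ ≠ [] ∧
        crp u v = c₁ ++ c₂ ∧
        u = t ++ c₁ ++ a ∧
        v = wInv a ++ c₂ ++ wInv t ∧
        FreeGroup.reduce (u ++ v) = t ++ c₁ ++ c₂ ++ wInv t ∧
        FreeGroup.reduce (v ++ u) = wInv a ++ c₂ ++ c₁ ++ a ∧
        crp v u = c₂ ++ c₁) ∨
    (∃ v₁ s a : Word α,
        u = wInv v₁ ++ s ++ crp u v ++ wInv s ++ a ∧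
        v = wInv a ++ v₁ ∧
        FreeGroup.reduce (u ++ v) = wInv v₁ ++ s ++ crp u v ++ wInv s ++ v₁) :=
  shirv_general u v hu hv
end
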